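/- There exists n₀ such that for all n ≥ n₀, all vertices x, y ∈ V_n, and all integers i ≥ 0, one has | Q_n^{i+θ_n}(x,y) + Q_n^{i+1+θ_n}(x,y) - 2·2^{-n} | ≤ 2·2^{-2n}; equivalently, P_{π_n}(J_n(i+θ_n) = y, J_n(0) = x) + P_{π_n}(J_n(i+1+θ_n) = y, J_n(0) = x) = 2(1+δ_n)·2^{-2n} with |δ_n| ≤ 2^{-n}, where J_n is the simple random walk started from the uniform distribution π_n. -/

import Mathlib

open Filter

/-- The vertex set of the `n`-dimensional discrete cube. -/
abbrev V (n : ℕ) := Fin n → Bool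

/-- The one-step transition matrix of the simple random walk on `V n`. -/
noncomputable def Q (n : ℕ) : Matrix (V n) (V n) ℝ :=
  fun x y => if hammingDist x y = 1 then (n : ℝ)⁻¹ else 0

/-- `θ_n = 2⌈(3/2)(n-1) log 2 / |log(1 - 2/n)|⌉`. -/
noncomputable def θ (n : ℕ) : ℕ :=
  2 * ⌈(3 / 2 : ℝ) * ((n : ℝ) - 1) * Real.log 2 / |Real.log (1 - 2 / (n : ℝ))|⌉₊

/-!
Read `true` as `-1`. The Walsh characters `χ_S(x) = ∏_{i ∈ S} x_i` are orthogonal eigenvectors of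
`Q n` with eigenvalues `λ_S = 1 - 2|S|/n`, so `Q^l(x, y) = 2^{-n} ∑_S λ_S^l χ_S(x) χ_S(y)`.
In `Q^l + Q^{l+1}` the character `χ_S` carries the weight `λ_S^l (1 + λ_S)`. For `S = ∅` it is `2`,
the main term; for `S = univ` it vanishes, since `λ_S = -1` (the walk is periodic, which is why two
consecutive steps are added); for every other `S` it is at most `2 (1 - 2/n)^l`. Summing these
fewer than `2^n` terms against the factor `2^{-n}` leaves `2 (1 - 2/n)^l`, and the choice of `θ_n`
makes this at most `2 · 2^{-2n}` for `l ≥ θ_n`.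
-/

open Finset Matrix

namespace Matrix

variable {α β K : Type*} [Fintype α] [DecidableEq α] [Fintype β] [Field K]

theorem pow_apply_eq_of_eigenbasis (A : Matrix α α K) (φ : β → α → K) (μ : β → K) {c : K}
    (hc : c ≠ 0) (heig : ∀ b, A *ᵥ φ b = μ b • φ b)
    (horth : ∀ x y, ∑ b, φ b x * φ b y = if x = y then c else 0) (l : ℕ) (x y : α) :
    (A ^ l) x y = c⁻¹ * ∑ b, μ b ^ l * (φ b x * φ b y) := by
  induction l generalizing x y with
  | zero => simp [horth, one_apply, hc]
  | succ l ih =>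
    have hrow : ∀ b, ∑ z, A x z * φ b z = μ b * φ b x := fun b => congrFun (heig b) x
    calc (A ^ (l + 1)) x y = ∑ z, A x z * (c⁻¹ * ∑ b, μ b ^ l * (φ b z * φ b y)) := by
          simp only [pow_succ', mul_apply, ih]
      _ = c⁻¹ * ∑ b, μ b ^ l * φ b y * ∑ z, A x z * φ b z := by
          simp only [mul_sum]
          rw [sum_comm]
          exact sum_congr rfl fun b _ => sum_congr rfl fun z _ => by ring
      _ = c⁻¹ * ∑ b, μ b ^ (l + 1) * (φ b x * φ b y) := by
          simp only [hrow, pow_succ]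
          congr 1
          exact sum_congr rfl fun b _ => by ring

end Matrix

section Walsh

variable {ι : Type*}

noncomputable def walsh (S : Finset ι) (x : ι → Bool) : ℝ :=
  ∏ i ∈ S, if x i then -1 else 1

@[simp]
lemma walsh_empty (x : ι → Bool) : walsh ∅ x = 1 := prod_empty

lemma abs_walsh (S : Finset ι) (x : ι → Bool) : |walsh S x| = 1 := by
  rw [walsh, abs_prod]
  exact prod_eq_one fun i _ => by cases x i <;> simp

lemma walsh_update_not [DecidableEq ι] (S : Finset ι) (x : ι → Bool) (j : ι) :
    walsh S (Function.update x j (!x j)) = (if j ∈ S then -1 else 1) * walsh S x := by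
  have hfactor : ∀ i, (if Function.update x j (!x j) i then (-1 : ℝ) else 1)
      = (if j = i then -1 else 1) * (if x i then -1 else 1) := by
    intro i
    rcases eq_or_ne i j with rfl | hij
    · cases x i <;> simp
    · simp [Function.update_of_ne hij, hij.symm]
  rw [walsh, walsh, prod_congr rfl fun i _ => hfactor i, prod_mul_distrib, prod_ite_eq]

lemma sum_walsh_mul_walsh [Fintype ι] (x y : ι → Bool) :
    ∑ S : Finset ι, walsh S x * walsh S y = if x = y then 2 ^ Fintype.card ι else 0 := by
  have hmul : ∀ S : Finset ι, walsh S x * walsh S y = ∏ i ∈ S, if x i = y i then 1 else -1 := by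
    intro S
    rw [walsh, walsh, ← prod_mul_distrib]
    exact prod_congr rfl fun i _ => by cases x i <;> cases y i <;> simp
  rw [sum_congr rfl fun S _ => hmul S, ← powerset_univ, ← prod_add_one]
  split_ifs with hxy
  · simp [hxy, one_add_one_eq_two]
  · obtain ⟨i, hi⟩ := Function.ne_iff.mp hxy
    exact prod_eq_zero (mem_univ i) (by simp [hi])

end Walsh

section Hypercube

variable {ι : Type*} [DecidableEq ι]

lemma update_not_injective (x : ι → Bool) :
    Function.Injective fun j => Function.update x j (!x j) := by
  intro j k h
  by_contra hjk
  have := congrFun h j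
  simp [Function.update_of_ne hjk] at this

variable [Fintype ι]

lemma hammingDist_eq_one_iff_exists_update_not {x z : ι → Bool} :
    hammingDist x z = 1 ↔ ∃ j, Function.update x j (!x j) = z := by
  rw [hammingDist, card_eq_one]
  refine ⟨fun ⟨j, hj⟩ => ⟨j, funext fun i => ?_⟩, fun ⟨j, hj⟩ => ⟨j, ?_⟩⟩
  · have hdiff : x i ≠ z i ↔ i = j := by simpa using congrArg (i ∈ ·) hj
    rcases eq_or_ne i j with rfl | hij
    · cases hx : x i <;> cases hz : z i <;> simp_all
    · rw [Function.update_of_ne hij]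
      exact not_not.mp (mt hdiff.mp hij)
  · subst hj
    refine eq_singleton_iff_unique_mem.mpr ⟨by simp, fun i hi => ?_⟩
    by_contra hij
    simp [Function.update_of_ne hij] at hi

end Hypercube

noncomputable def walshEigenvalue (n : ℕ) (S : Finset (Fin n)) : ℝ := 1 - 2 * #S / n

section RandomWalk

variable {n : ℕ}

lemma Q_mulVec_apply (f : V n → ℝ) (x : V n) :
    (Q n *ᵥ f) x = (n : ℝ)⁻¹ * ∑ j, f (Function.update x j (!x j)) := by
  have hnbrs : univ.image (fun j => Function.update x j (!x j))
      = univ.filter (hammingDist x · = 1) := by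
    ext z
    simp [hammingDist_eq_one_iff_exists_update_not]
  rw [mulVec, dotProduct, ← sum_image (f := f) fun j _ k _ h => update_not_injective x h, hnbrs,
    sum_filter, mul_sum]
  exact sum_congr rfl fun z _ => by unfold Q; split_ifs <;> simp

lemma Q_mulVec_walsh (hn : 0 < n) (S : Finset (Fin n)) :
    Q n *ᵥ walsh S = walshEigenvalue n S • walsh S := by
  funext x
  have hsign : ∑ j : Fin n, (if j ∈ S then (-1 : ℝ) else 1) = n - 2 * #S := by
    have hsplit : ∀ j : Fin n, (if j ∈ S then (-1 : ℝ) else 1) = 1 - 2 * if j ∈ S then 1 else 0 :=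
      fun j => by split_ifs <;> norm_num
    simp [hsplit, sum_sub_distrib, mul_comm]
  simp only [Q_mulVec_apply, walsh_update_not, ← sum_mul, hsign, Pi.smul_apply, smul_eq_mul,
    walshEigenvalue]
  field_simp

lemma Q_pow_apply (hn : 0 < n) (l : ℕ) (x y : V n) :
    (Q n ^ l) x y = ((2 : ℝ) ^ n)⁻¹ * ∑ S, walshEigenvalue n S ^ l * (walsh S x * walsh S y) := by
  refine pow_apply_eq_of_eigenbasis _ _ _ (by positivity) (Q_mulVec_walsh hn) (fun x y => ?_) l x y
  rw [sum_walsh_mul_walsh, Fintype.card_fin]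

@[simp]
lemma walshEigenvalue_empty : walshEigenvalue n ∅ = 1 := by simp [walshEigenvalue]

lemma walshEigenvalue_univ (hn : 0 < n) : walshEigenvalue n univ = -1 := by
  have : (n : ℝ) ≠ 0 := by positivity
  simp only [walshEigenvalue, card_univ, Fintype.card_fin]
  field_simp
  ring

lemma abs_walshEigenvalue_le {S : Finset (Fin n)} (hS : S.Nonempty) (hSn : #S < n) :
    |walshEigenvalue n S| ≤ 1 - 2 / n := by
  have hn : (0 : ℝ) < n := by exact_mod_cast hS.card_pos.trans hSn
  have hk : 1 / (n : ℝ) ≤ #S / n := by gcongr; exact_mod_cast hS.card_pos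
  have hk' : (#S : ℝ) / n + 1 / n ≤ 1 := by
    rw [← add_div, div_le_one hn]; exact_mod_cast hSn
  rw [walshEigenvalue, abs_le, mul_div_assoc, ← mul_one_div 2 (n : ℝ)]
  constructor <;> linarith

lemma abs_one_add_walshEigenvalue_le (hn : 0 < n) (S : Finset (Fin n)) :
    |1 + walshEigenvalue n S| ≤ 2 := by
  have hk : (#S : ℝ) / n ≤ 1 := by
    rw [div_le_one (by positivity)]; exact_mod_cast card_le_univ S |>.trans_eq (Fintype.card_fin n)
  have : (0 : ℝ) ≤ #S / n := by positivity
  rw [walshEigenvalue, abs_le, mul_div_assoc]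
  constructor <;> linarith

lemma one_sub_two_div_nonneg (hn : 2 ≤ n) : (0 : ℝ) ≤ 1 - 2 / n := by
  rw [sub_nonneg, div_le_one (by positivity)]
  exact_mod_cast hn

lemma abs_walshEigenvalue_pow_add_pow_succ_le (hn : 2 ≤ n) {S : Finset (Fin n)}
    (hS : S.Nonempty) (l : ℕ) :
    |walshEigenvalue n S ^ l + walshEigenvalue n S ^ (l + 1)| ≤ 2 * (1 - 2 / n) ^ l := by
  rw [pow_succ, ← mul_one_add, abs_mul, abs_pow, mul_comm]
  rcases (card_le_univ S).lt_or_eq with hlt | heq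
  · rw [Fintype.card_fin] at hlt
    exact mul_le_mul (abs_one_add_walshEigenvalue_le (by omega) S)
      (pow_le_pow_left₀ (abs_nonneg _) (abs_walshEigenvalue_le hS hlt) l) (by positivity)
      zero_le_two
  · rw [eq_univ_of_card S heq, walshEigenvalue_univ (by omega), add_neg_cancel, abs_zero,
      zero_mul]
    exact mul_nonneg zero_le_two <| pow_nonneg (one_sub_two_div_nonneg hn) l

lemma abs_Q_pow_add_Q_pow_succ_sub_le (hn : 2 ≤ n) (l : ℕ) (x y : V n) :
    |(Q n ^ l) x y + (Q n ^ (l + 1)) x y - 2 * ((2 : ℝ) ^ n)⁻¹| ≤ 2 * (1 - 2 / n) ^ l := by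
  have hsplit : (Q n ^ l) x y + (Q n ^ (l + 1)) x y - 2 * ((2 : ℝ) ^ n)⁻¹
      = ((2 : ℝ) ^ n)⁻¹ * ∑ S ∈ univ.erase ∅,
          (walshEigenvalue n S ^ l + walshEigenvalue n S ^ (l + 1)) * (walsh S x * walsh S y) := by
    rw [Q_pow_apply (by omega), Q_pow_apply (by omega), ← mul_add, ← sum_add_distrib,
      ← add_sum_erase _ _ (mem_univ ∅)]
    simp only [walshEigenvalue_empty, walsh_empty, ← add_mul]
    ring
  have hterm : ∀ S ∈ univ.erase ∅, |(walshEigenvalue n S ^ l + walshEigenvalue n S ^ (l + 1))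
      * (walsh S x * walsh S y)| ≤ 2 * (1 - 2 / n) ^ l := fun S hS => by
    rw [abs_mul, abs_mul, abs_walsh, abs_walsh, mul_one, mul_one]
    exact abs_walshEigenvalue_pow_add_pow_succ_le hn
      (nonempty_iff_ne_empty.mpr (ne_of_mem_erase hS)) l
  have hbound_nonneg : (0 : ℝ) ≤ 2 * (1 - 2 / n) ^ l :=
    mul_nonneg zero_le_two (pow_nonneg (one_sub_two_div_nonneg hn) l)
  rw [hsplit, abs_mul, abs_inv, abs_of_pos (by positivity), inv_mul_le_iff₀ (by positivity)]
  calc _ ≤ ∑ S ∈ univ.erase ∅, 2 * (1 - 2 / (n : ℝ)) ^ l :=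
        (abs_sum_le_sum_abs _ _).trans (sum_le_sum hterm)
    _ ≤ ∑ _S : Finset (Fin n), 2 * (1 - 2 / (n : ℝ)) ^ l :=
        sum_le_sum_of_subset_of_nonneg (erase_subset _ _) fun _ _ _ => hbound_nonneg
    _ = 2 ^ n * (2 * (1 - 2 / n) ^ l) := by simp

lemma one_sub_two_div_pow_θ_le (hn : 3 ≤ n) : (1 - 2 / (n : ℝ)) ^ θ n ≤ ((2 : ℝ) ^ (2 * n))⁻¹ := by
  have hnR : (3 : ℝ) ≤ n := by exact_mod_cast hn
  have hr₀ : 0 < 1 - 2 / (n : ℝ) := by rw [sub_pos, div_lt_one (by positivity)]; linarith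
  have hr₁ : 1 - 2 / (n : ℝ) < 1 := by linarith [show 0 < 2 / (n : ℝ) by positivity]
  have hlog : Real.log (1 - 2 / n) < 0 := Real.log_neg hr₀ hr₁
  have hθ : 3 * ((n : ℝ) - 1) * Real.log 2 ≤ θ n * -Real.log (1 - 2 / n) := by
    rw [← div_le_iff₀ (neg_pos.mpr hlog), θ, abs_of_neg hlog]
    push_cast
    calc 3 * ((n : ℝ) - 1) * Real.log 2 / -Real.log (1 - 2 / n)
        = 2 * ((3 / 2) * ((n : ℝ) - 1) * Real.log 2 / -Real.log (1 - 2 / n)) := by ring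
      _ ≤ _ := mul_le_mul_of_nonneg_left (Nat.le_ceil _) zero_le_two
  -- `θ n` makes `(1 - 2/n)^θ n ≤ 2^(-3(n-1))`, and `3(n-1) ≥ 2n` once `n ≥ 3`.
  rw [← Real.log_le_log_iff (by positivity) (by positivity), Real.log_pow, Real.log_inv,
    Real.log_pow]
  push_cast
  nlinarith [Real.log_pos one_lt_two]

end RandomWalk

/-- For all large `n`, all `x, y ∈ V_n` and all `i ≥ 0`,
`|Q^{i+θ_n}(x,y) + Q^{i+1+θ_n}(x,y) - 2·2^{-n}| ≤ 2·2^{-2n}`, i.e.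
`P_{π_n}(J_n(i+θ_n)=y, J_n(0)=x) + P_{π_n}(J_n(i+1+θ_n)=y, J_n(0)=x) = 2(1+δ_n)2^{-2n}`
with `|δ_n| ≤ 2^{-n}`. -/
theorem srw_mixing : ∃ n₀ : ℕ, ∀ n ≥ n₀, ∀ x y : V n, ∀ i : ℕ,
    |(Q n ^ (i + θ n)) x y + (Q n ^ (i + 1 + θ n)) x y - 2 * ((2 : ℝ) ^ n)⁻¹|
      ≤ 2 * ((2 : ℝ) ^ (2 * n))⁻¹ := by
  refine ⟨3, fun n hn x y i => ?_⟩
  have hr₀ : 0 ≤ 1 - 2 / (n : ℝ) := one_sub_two_div_nonneg (by omega)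
  have hr₁ : 1 - 2 / (n : ℝ) ≤ 1 := sub_le_self _ (by positivity)
  rw [add_right_comm i 1]
  calc _ ≤ 2 * (1 - 2 / (n : ℝ)) ^ (i + θ n) := abs_Q_pow_add_Q_pow_succ_sub_le (by omega) _ x y
    _ ≤ 2 * (1 - 2 / (n : ℝ)) ^ θ n :=
        mul_le_mul_of_nonneg_left (pow_le_pow_of_le_one hr₀ hr₁ (by omega)) zero_le_two
    _ ≤ 2 * ((2 : ℝ) ^ (2 * n))⁻¹ :=
        mul_le_mul_of_nonneg_left (one_sub_two_div_pow_θ_le hn) zero_le_two
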